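/- Bibasic Heine transformation: Let q, h, t be complex numbers with |q^h| < 1, |q^t| < 1 and |q^{ht}| < 1 (principal complex powers), and let a, b, w, z be complex numbers with |w| < 1 and |z| < 1, such that all denominators below are nonzero. Then ((bw;q^t)_∞ / (w;q^t)_∞) · ∑_{k=0}^∞ [(a;q^h)_k / (q^h;q^h)_k] · [(w;q^t)_{hk} / (bw;q^t)_{hk}] · z^k = ((az;q^h)_∞ / (z;q^h)_∞) · ∑_{j=0}^∞ [(b;q^t)_j / (q^t;q^t)_j] · [(z;q^h)_{tj} / (az;q^h)_{tj}] · w^j. -/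

import Mathlib

/-!
Both sides equal the absolutely convergent double series
`∑_{k,j} (a;q^h)_k/(q^h;q^h)_k · (b;q^t)_j/(q^t;q^t)_j · z^k w^j (q^{ht})^{kj}`.
Summing over `j` first, the `k`-th row is, by the q-binomial theorem in base `q^t` at the point
`w (q^{ht})^k`, the `k`-th term of the left side; summing over `k` first gives the right side.
The q-binomial theorem `∑ (a;Q)_n/(Q;Q)_n x^n = (ax;Q)_∞/(x;Q)_∞` follows from the functional
equation `(1 - x) F(x) = (1 - a x) F(Q x)` of the series `F`, iterated `N` times and passed to
the limit `F(Q^N x) → F(0) = 1`.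
-/

open Complex

/-- Finite q-Pochhammer symbol `(A;Q)_k = ∏_{r=0}^{k-1} (1 - A Q^r)`. -/
noncomputable def qp (A Q : ℂ) (k : ℕ) : ℂ := ∏ r ∈ Finset.range k, (1 - A * Q ^ r)

/-- Infinite q-Pochhammer symbol `(A;Q)_∞ = ∏_{r=0}^{∞} (1 - A Q^r)`. -/
noncomputable def qpInf (A Q : ℂ) : ℂ := ∏' r : ℕ, (1 - A * Q ^ r)

/-- q-Pochhammer symbol with (possibly non-integer) index:
`(A;Q)_{c k} := (A;Q)_∞ / (A R^k;Q)_∞` where `R = Q^c`. -/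
noncomputable def qpc (A Q R : ℂ) (k : ℕ) : ℂ := qpInf A Q / qpInf (A * R ^ k) Q

/-- q-Pochhammer symbol with shifted (possibly non-integer) index:
`(A;Q)_{c k + 1} := (A;Q)_∞ / (A Q R^k;Q)_∞` where `R = Q^c`. -/
noncomputable def qpc1 (A Q R : ℂ) (k : ℕ) : ℂ := qpInf A Q / qpInf (A * Q * R ^ k) Q

open Filter Finset Topology

section QPochhammer

variable {Q : ℂ}

lemma one_sub_ne_zero_of_norm_lt_one {x : ℂ} (hx : ‖x‖ < 1) : 1 - x ≠ 0 := by
  rw [sub_ne_zero]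
  rintro rfl
  simp at hx

lemma norm_mul_pow_le (A : ℂ) (hQ : ‖Q‖ ≤ 1) (n : ℕ) : ‖A * Q ^ n‖ ≤ ‖A‖ := by
  rw [norm_mul, norm_pow]
  exact mul_le_of_le_one_right (norm_nonneg A) (pow_le_one₀ (norm_nonneg Q) hQ)

lemma norm_mul_pow_lt_one {A : ℂ} (hA : ‖A‖ < 1) (hQ : ‖Q‖ ≤ 1) (n : ℕ) : ‖A * Q ^ n‖ < 1 :=
  (norm_mul_pow_le A hQ n).trans_lt hA

lemma qp_succ (A Q : ℂ) (n : ℕ) : qp A Q (n + 1) = qp A Q n * (1 - A * Q ^ n) :=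
  prod_range_succ _ _

lemma summable_norm_neg_mul_pow (A : ℂ) (hQ : ‖Q‖ < 1) :
    Summable fun r : ℕ => ‖-(A * Q ^ r)‖ := by
  simpa [norm_mul, norm_pow] using
    (summable_geometric_of_lt_one (norm_nonneg Q) hQ).mul_left ‖A‖

lemma hasProd_qpInf (A : ℂ) (hQ : ‖Q‖ < 1) :
    HasProd (fun r : ℕ => 1 - A * Q ^ r) (qpInf A Q) := by
  have : Multipliable fun r : ℕ => 1 - A * Q ^ r := by
    simpa only [sub_eq_add_neg] using
      multipliable_one_add_of_summable (summable_norm_neg_mul_pow A hQ)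
  exact this.hasProd

lemma tendsto_qp (A : ℂ) (hQ : ‖Q‖ < 1) : Tendsto (qp A Q) atTop (𝓝 (qpInf A Q)) :=
  (hasProd_qpInf A hQ).tendsto_prod_nat

lemma qpInf_ne_zero {A : ℂ} (hQ : ‖Q‖ < 1) (hA : ∀ r : ℕ, 1 - A * Q ^ r ≠ 0) : qpInf A Q ≠ 0 := by
  simpa only [qpInf, sub_eq_add_neg] using
    tprod_one_add_ne_zero_of_summable (by simpa only [sub_eq_add_neg] using hA)
      (summable_norm_neg_mul_pow A hQ)

lemma qpInf_ne_zero_of_norm_lt_one {A : ℂ} (hQ : ‖Q‖ < 1) (hA : ‖A‖ < 1) : qpInf A Q ≠ 0 :=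
  qpInf_ne_zero hQ fun r => one_sub_ne_zero_of_norm_lt_one (norm_mul_pow_lt_one hA hQ.le r)

lemma qp_self_ne_zero (hQ : ‖Q‖ < 1) (n : ℕ) : qp Q Q n ≠ 0 :=
  prod_ne_zero_iff.mpr fun r _ => one_sub_ne_zero_of_norm_lt_one (norm_mul_pow_lt_one hQ hQ.le r)

end QPochhammer

section QBinomial

variable {Q : ℂ}

noncomputable def qBinomialSeries (a Q y : ℂ) : ℂ := ∑' n : ℕ, qp a Q n / qp Q Q n * y ^ n

lemma exists_norm_qp_div_qp_le (a : ℂ) (hQ : ‖Q‖ < 1) :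
    ∃ M, ∀ n, ‖qp a Q n / qp Q Q n‖ ≤ M := by
  have hlim := (tendsto_qp a hQ).div (tendsto_qp Q hQ) (qpInf_ne_zero_of_norm_lt_one hQ hQ)
  obtain ⟨M, hM⟩ := (Metric.isBounded_range_of_tendsto _ hlim).exists_norm_le
  exact ⟨M, fun n => hM _ ⟨n, rfl⟩⟩

lemma summable_qp_div_qp_mul_pow (a : ℂ) (hQ : ‖Q‖ < 1) {y : ℂ} (hy : ‖y‖ < 1) :
    Summable fun n => qp a Q n / qp Q Q n * y ^ n := by
  obtain ⟨M, hM⟩ := exists_norm_qp_div_qp_le a hQ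
  refine .of_norm_bounded ((summable_geometric_of_lt_one (norm_nonneg y) hy).mul_left M)
    fun n => ?_
  rw [norm_mul, norm_pow]
  exact mul_le_mul_of_nonneg_right (hM n) (by positivity)

lemma qp_div_qp_succ_mul (a : ℂ) (hQ : ‖Q‖ < 1) (n : ℕ) :
    qp a Q (n + 1) / qp Q Q (n + 1) * (1 - Q ^ (n + 1)) =
      qp a Q n / qp Q Q n * (1 - a * Q ^ n) := by
  have hQn : 1 - Q ^ (n + 1) ≠ 0 := one_sub_ne_zero_of_norm_lt_one <| by
    rw [norm_pow]
    exact pow_lt_one₀ (norm_nonneg Q) hQ n.succ_ne_zero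
  rw [qp_succ a, qp_succ Q, ← pow_succ']
  field_simp [qp_self_ne_zero hQ n]

lemma qBinomialSeries_functional_eq (a : ℂ) (hQ : ‖Q‖ < 1) {y : ℂ} (hy : ‖y‖ < 1) :
    (1 - y) * qBinomialSeries a Q y = (1 - a * y) * qBinomialSeries a Q (Q * y) := by
  have S := summable_qp_div_qp_mul_pow a hQ hy
  have SQ := summable_qp_div_qp_mul_pow a hQ (y := Q * y)
    (by simpa [mul_comm] using norm_mul_pow_lt_one hy hQ.le 1)
  -- `F y - F (Q y) = ∑ c n (1 - Q^n) y^n` with `c n = (a;Q)_n/(Q;Q)_n`; shift the index and use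
  -- `c (n+1) (1 - Q^(n+1)) = c n (1 - a Q^n)`
  have hdiff : qBinomialSeries a Q y - qBinomialSeries a Q (Q * y) =
      y * qBinomialSeries a Q y - a * y * qBinomialSeries a Q (Q * y) := by
    have hsub := S.sub SQ
    rw [qBinomialSeries, qBinomialSeries, ← S.tsum_sub SQ, hsub.tsum_eq_zero_add,
      ← tsum_mul_left, ← tsum_mul_left, ← (S.mul_left y).tsum_sub (SQ.mul_left (a * y))]
    simp only [pow_zero, mul_one, sub_self, zero_add]
    refine tsum_congr fun n => ?_
    have hc := qp_div_qp_succ_mul a hQ n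
    linear_combination y ^ (n + 1) * hc
  linear_combination hdiff

lemma qp_mul_qBinomialSeries (a : ℂ) (hQ : ‖Q‖ < 1) {x : ℂ} (hx : ‖x‖ < 1) (N : ℕ) :
    qp x Q N * qBinomialSeries a Q x = qp (a * x) Q N * qBinomialSeries a Q (Q ^ N * x) := by
  induction N with
  | zero => simp [qp]
  | succ N ih =>
    have hfe := qBinomialSeries_functional_eq a hQ (y := Q ^ N * x)
      (by rw [mul_comm]; exact norm_mul_pow_lt_one hx hQ.le N)
    rw [qp_succ, qp_succ, pow_succ', mul_assoc Q]
    linear_combination (1 - x * Q ^ N) * ih + qp (a * x) Q N * hfe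

lemma tendsto_qBinomialSeries_pow_mul (a : ℂ) (hQ : ‖Q‖ < 1) {x : ℂ} (hx : ‖x‖ < 1) :
    Tendsto (fun N : ℕ => qBinomialSeries a Q (Q ^ N * x)) atTop (𝓝 1) := by
  obtain ⟨M, hM⟩ := exists_norm_qp_div_qp_le a hQ
  have hterm (n : ℕ) : Tendsto (fun N : ℕ => qp a Q n / qp Q Q n * (Q ^ N * x) ^ n) atTop
      (𝓝 (qp a Q n / qp Q Q n * 0 ^ n)) := by
    have := (tendsto_pow_atTop_nhds_zero_of_norm_lt_one hQ).mul_const x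
    rw [zero_mul] at this
    exact (this.pow n).const_mul _
  have hbound : ∀ N n, ‖qp a Q n / qp Q Q n * (Q ^ N * x) ^ n‖ ≤ M * ‖x‖ ^ n := fun N n => by
    rw [norm_mul, norm_pow, mul_comm (Q ^ N)]
    exact mul_le_mul (hM n) (pow_le_pow_left₀ (norm_nonneg _) (norm_mul_pow_le x hQ.le N) n)
      (by positivity) ((norm_nonneg _).trans (hM 0))
  have hlim := tendsto_tsum_of_dominated_convergence
    ((summable_geometric_of_lt_one (norm_nonneg x) hx).mul_left M) hterm
    (Eventually.of_forall hbound)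
  rwa [tsum_eq_single 0 fun n hn => by simp [hn], pow_zero, mul_one, qp, qp,
    prod_range_zero, prod_range_zero, div_one] at hlim

theorem qBinomialSeries_eq (a : ℂ) (hQ : ‖Q‖ < 1) {x : ℂ} (hx : ‖x‖ < 1) :
    qBinomialSeries a Q x = qpInf (a * x) Q / qpInf x Q := by
  have hlim := (tendsto_qp (a * x) hQ).mul (tendsto_qBinomialSeries_pow_mul a hQ hx)
  rw [mul_one] at hlim
  have hprod := tendsto_nhds_unique ((tendsto_qp x hQ).mul_const (qBinomialSeries a Q x))
    (hlim.congr fun N => (qp_mul_qBinomialSeries a hQ hx N).symm)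
  rw [eq_div_iff (qpInf_ne_zero_of_norm_lt_one hQ hx), mul_comm, hprod]

end QBinomial

section Bibasic

variable {a b Q Q' R w z : ℂ}

noncomputable def bibasicTerm (a Q z b Q' w R : ℂ) (k j : ℕ) : ℂ :=
  qp a Q k / qp Q Q k * z ^ k * (qp b Q' j / qp Q' Q' j * w ^ j) * R ^ (k * j)

lemma bibasicTerm_swap (k j : ℕ) :
    bibasicTerm b Q' w a Q z R j k = bibasicTerm a Q z b Q' w R k j := by
  rw [bibasicTerm, bibasicTerm, Nat.mul_comm]
  ring

lemma summable_bibasicTerm (hQ : ‖Q‖ < 1) (hQ' : ‖Q'‖ < 1) (hR : ‖R‖ ≤ 1)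
    (hz : ‖z‖ < 1) (hw : ‖w‖ < 1) :
    Summable (Function.uncurry (bibasicTerm a Q z b Q' w R)) := by
  obtain ⟨Ma, hMa⟩ := exists_norm_qp_div_qp_le a hQ
  obtain ⟨Mb, hMb⟩ := exists_norm_qp_div_qp_le b hQ'
  have hMa0 : 0 ≤ Ma := (norm_nonneg _).trans (hMa 0)
  have hMb0 : 0 ≤ Mb := (norm_nonneg _).trans (hMb 0)
  have hgeom : Summable fun p : ℕ × ℕ => Ma * ‖z‖ ^ p.1 * (Mb * ‖w‖ ^ p.2) :=
    .mul_of_nonneg (f := fun k => Ma * ‖z‖ ^ k) (g := fun j => Mb * ‖w‖ ^ j)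
      ((summable_geometric_of_lt_one (norm_nonneg z) hz).mul_left Ma)
      ((summable_geometric_of_lt_one (norm_nonneg w) hw).mul_left Mb)
      (fun k => by positivity) (fun j => by positivity)
  have hbound (p : ℕ × ℕ) :
      ‖Function.uncurry (bibasicTerm a Q z b Q' w R) p‖ ≤ Ma * ‖z‖ ^ p.1 * (Mb * ‖w‖ ^ p.2) := by
    simp only [Function.uncurry, bibasicTerm, norm_mul, norm_pow]
    refine (mul_le_of_le_one_right (by positivity) (pow_le_one₀ (norm_nonneg R) hR)).trans ?_
    gcongr
    exacts [hMa p.1, hMb p.2]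
  exact hgeom.of_norm_bounded hbound

lemma qpInf_div_mul_qpc_div_qpc (hw : qpInf w Q ≠ 0) (hbw : qpInf (b * w) Q ≠ 0) (k : ℕ) :
    qpInf (b * w) Q / qpInf w Q * (qpc w Q R k / qpc (b * w) Q R k) =
      qpInf (b * w * R ^ k) Q / qpInf (w * R ^ k) Q := by
  rw [qpc, qpc, div_div_div_eq]
  field_simp

lemma bibasic_heine_lhs_eq_tsum_tsum (hQ' : ‖Q'‖ < 1) (hR : ‖R‖ ≤ 1) (hw : ‖w‖ < 1)
    (hbw : qpInf (b * w) Q' ≠ 0) :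
    qpInf (b * w) Q' / qpInf w Q' *
        ∑' k : ℕ, qp a Q k / qp Q Q k * (qpc w Q' R k / qpc (b * w) Q' R k) * z ^ k =
      ∑' k : ℕ, ∑' j : ℕ, bibasicTerm a Q z b Q' w R k j := by
  rw [← tsum_mul_left]
  refine tsum_congr fun k => ?_
  have hwR := norm_mul_pow_lt_one hw hR k
  calc _ = qp a Q k / qp Q Q k * z ^ k * qBinomialSeries b Q' (w * R ^ k) := by
        rw [qBinomialSeries_eq b hQ' hwR, ← mul_assoc b,
          ← qpInf_div_mul_qpc_div_qpc (qpInf_ne_zero_of_norm_lt_one hQ' hw) hbw]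
        ring
    _ = _ := by
        rw [qBinomialSeries, ← tsum_mul_left]
        refine tsum_congr fun j => ?_
        rw [bibasicTerm, mul_pow, ← pow_mul]
        ring

end Bibasic

theorem bibasic_heine_general (q h t a b w z : ℂ)
    (hqh : ‖q ^ h‖ < 1) (hqt : ‖q ^ t‖ < 1)
    (hqht : ‖q ^ (h * t)‖ < 1)
    (hw : ‖w‖ < 1) (hz : ‖z‖ < 1)
    (h6 : ∀ k : ℕ, qpInf (b * w * (q ^ (h * t)) ^ k) (q ^ t) ≠ 0)
    (h9 : ∀ j : ℕ, qpInf (a * z * (q ^ (h * t)) ^ j) (q ^ h) ≠ 0) :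
    (qpInf (b * w) (q ^ t) / qpInf w (q ^ t)) *
      ∑' k : ℕ, (qp a (q ^ h) k / qp (q ^ h) (q ^ h) k) *
        (qpc w (q ^ t) (q ^ (h * t)) k / qpc (b * w) (q ^ t) (q ^ (h * t)) k) * z ^ k
    = (qpInf (a * z) (q ^ h) / qpInf z (q ^ h)) *
      ∑' j : ℕ, (qp b (q ^ t) j / qp (q ^ t) (q ^ t) j) *
        (qpc z (q ^ h) (q ^ (h * t)) j / qpc (a * z) (q ^ h) (q ^ (h * t)) j) * w ^ j := by
  rw [bibasic_heine_lhs_eq_tsum_tsum hqt hqht.le hw (by simpa using h6 0),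
    bibasic_heine_lhs_eq_tsum_tsum hqh hqht.le hz (by simpa using h9 0)]
  simp only [bibasicTerm_swap (a := a) (b := b)]
  exact (summable_bibasicTerm hqh hqt hqht.le hz hw).tsum_comm.symm

/-- the bibasic Heine transformation. -/
theorem bibasic_heine (q h t a b w z : ℂ)
    (hqh : ‖q ^ h‖ < 1) (hqt : ‖q ^ t‖ < 1)
    (hqht : ‖q ^ (h * t)‖ < 1)
    (hw : ‖w‖ < 1) (hz : ‖z‖ < 1)
    (h1 : qpInf w (q ^ t) ≠ 0)
    (h2 : qpInf z (q ^ h) ≠ 0)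
    (h3 : ∀ k : ℕ, qp (q ^ h) (q ^ h) k ≠ 0)
    (h4 : ∀ j : ℕ, qp (q ^ t) (q ^ t) j ≠ 0)
    (h5 : ∀ k : ℕ, qpInf (w * (q ^ (h * t)) ^ k) (q ^ t) ≠ 0)
    (h6 : ∀ k : ℕ, qpInf (b * w * (q ^ (h * t)) ^ k) (q ^ t) ≠ 0)
    (h7 : ∀ k : ℕ, qpc (b * w) (q ^ t) (q ^ (h * t)) k ≠ 0)
    (h8 : ∀ j : ℕ, qpInf (z * (q ^ (h * t)) ^ j) (q ^ h) ≠ 0)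
    (h9 : ∀ j : ℕ, qpInf (a * z * (q ^ (h * t)) ^ j) (q ^ h) ≠ 0)
    (h10 : ∀ j : ℕ, qpc (a * z) (q ^ h) (q ^ (h * t)) j ≠ 0) :
    (qpInf (b * w) (q ^ t) / qpInf w (q ^ t)) *
      ∑' k : ℕ, (qp a (q ^ h) k / qp (q ^ h) (q ^ h) k) *
        (qpc w (q ^ t) (q ^ (h * t)) k / qpc (b * w) (q ^ t) (q ^ (h * t)) k) * z ^ k
    = (qpInf (a * z) (q ^ h) / qpInf z (q ^ h)) *
      ∑' j : ℕ, (qp b (q ^ t) j / qp (q ^ t) (q ^ t) j) *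
        (qpc z (q ^ h) (q ^ (h * t)) j / qpc (a * z) (q ^ h) (q ^ (h * t)) j) * w ^ j :=
  bibasic_heine_general q h t a b w z hqh hqt hqht hw hz h6 h9
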